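/- Every element A of a Yao-Yao partition P of an n-dimensional real affine space E with center x is of the form A = x + pos(v₁,…,vₙ) for some basis v₁,…,vₙ of the direction space of E, where pos denotes the positive hull. -/

import Mathlib

/-- Yao-Yao partitions (Definition 1), inductively: `IsYaoYao n E P x` means `P` is a
Yao-Yao partition with center `x` of the `n`-dimensional affine subspace of `V` whose
carrier set is `E`.  In dimension `0`, `E` is a point `{x}` and `P = {{x}}`; in dimension
`n+1`, `P` is built from a hyperplane `F` of `E` (an `n`-dimensional carrier), a vector
`v` outside the direction of `F`, and two Yao-Yao partitions `P₁, P₋₁` of `F` with the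
same center `x`, as `{A + ℝ₋v : A ∈ P₋₁} ∪ {A + ℝ₊v : A ∈ P₁}`. -/
inductive IsYaoYao {V : Type*} [AddCommGroup V] [Module ℝ V] :
    ℕ → Set V → Set (Set V) → V → Prop
  | zero (x : V) : IsYaoYao 0 {x} {{x}} x
  | succ {n : ℕ} {F : Set V} (v : V) {P₁ Pm : Set (Set V)} {x : V}
      (hv : v ∉ vectorSpan ℝ F)
      (h1 : IsYaoYao n F P₁ x) (hm : IsYaoYao n F Pm x) :
      IsYaoYao (n + 1) {y | ∃ a ∈ F, ∃ t : ℝ, y = a + t • v}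
        ({B | ∃ A ∈ Pm, B = {y | ∃ a ∈ A, ∃ t : ℝ, t ≤ 0 ∧ y = a + t • v}} ∪
         {B | ∃ A ∈ P₁, B = {y | ∃ a ∈ A, ∃ t : ℝ, 0 ≤ t ∧ y = a + t • v}}) x

/-!
Induction on the construction of the partition, with the invariant that each cell is
`x + pos(v₁,…,vₙ)` for independent generators lying in the direction of the carrier.
A new cell `A + ℝ₊w` (with `w = ±v`) of `A = x + pos(v₁,…,vₙ)` is `x + pos(v₁,…,vₙ,w)`, and
`w` is independent of the `vᵢ` because they span a subspace of `vectorSpan F ∌ w`.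
-/

open Set

variable {V : Type*} [AddCommGroup V] [Module ℝ V]

/-- `x + pos(v)`. -/
def posCone {ι : Type*} [Fintype ι] (x : V) (v : ι → V) : Set V :=
  {z | ∃ t : ι → ℝ, (∀ i, 0 ≤ t i) ∧ z = x + ∑ i, t i • v i}

/-- `A + ℝ₊w`. -/
def raySweep (A : Set V) (w : V) : Set V :=
  {y | ∃ a ∈ A, ∃ t : ℝ, 0 ≤ t ∧ y = a + t • w}

def IsSimplicialCone (n : ℕ) (E : Set V) (x : V) (A : Set V) : Prop :=
  ∃ v : Fin n → V, LinearIndependent ℝ v ∧ (∀ i, v i ∈ vectorSpan ℝ E) ∧ A = posCone x v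

theorem posCone_of_isEmpty {ι : Type*} [Fintype ι] [IsEmpty ι] (x : V) (v : ι → V) :
    posCone x v = {x} := by
  ext z
  simp [posCone]

theorem raySweep_posCone_eq_posCone_snoc {n : ℕ} (x : V) (v : Fin n → V) (w : V) :
    raySweep (posCone x v) w = posCone x (Fin.snoc v w : Fin (n + 1) → V) := by
  ext z
  constructor
  · rintro ⟨a, ⟨t, ht, rfl⟩, s, hs, rfl⟩
    refine ⟨Fin.snoc t s, Fin.forall_fin_succ'.mpr ⟨by simpa using ht, by simpa using hs⟩, ?_⟩
    simp [Fin.sum_univ_castSucc, add_assoc]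
  · rintro ⟨t, ht, rfl⟩
    refine ⟨x + ∑ i, t i.castSucc • v i, ⟨fun i => t i.castSucc, fun i => ht _, rfl⟩,
      t (Fin.last n), ht _, ?_⟩
    simp [Fin.sum_univ_castSucc, add_assoc]

theorem setOf_nonpos_smul_eq_raySweep_neg (A : Set V) (v : V) :
    {y | ∃ a ∈ A, ∃ t : ℝ, t ≤ 0 ∧ y = a + t • v} = raySweep A (-v) := by
  ext y
  constructor
  · rintro ⟨a, ha, t, ht, rfl⟩
    exact ⟨a, ha, -t, neg_nonneg.mpr ht, by simp⟩
  · rintro ⟨a, ha, s, hs, rfl⟩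
    exact ⟨a, ha, -s, neg_nonpos.mpr hs, by simp⟩

section Cylinder

variable {F : Set V} {v : V}

theorem vectorSpan_le_vectorSpan_cylinder :
    vectorSpan ℝ F ≤ vectorSpan ℝ {y | ∃ a ∈ F, ∃ t : ℝ, y = a + t • v} :=
  vectorSpan_mono ℝ fun a ha => ⟨a, ha, 0, by simp⟩

theorem smul_mem_vectorSpan_cylinder {x : V} (hx : x ∈ F) (c : ℝ) :
    c • v ∈ vectorSpan ℝ {y | ∃ a ∈ F, ∃ t : ℝ, y = a + t • v} := by
  have hxc : x + c • v ∈ {y | ∃ a ∈ F, ∃ t : ℝ, y = a + t • v} := ⟨x, hx, c, rfl⟩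
  have hx0 : x ∈ {y | ∃ a ∈ F, ∃ t : ℝ, y = a + t • v} := ⟨x, hx, 0, by simp⟩
  simpa using vsub_mem_vectorSpan ℝ hxc hx0

end Cylinder

theorem IsSimplicialCone.raySweep {n : ℕ} {F E : Set V} {x w : V} {A : Set V}
    (hA : IsSimplicialCone n F x A) (hFE : vectorSpan ℝ F ≤ vectorSpan ℝ E)
    (hwF : w ∉ vectorSpan ℝ F) (hwE : w ∈ vectorSpan ℝ E) :
    IsSimplicialCone (n + 1) E x (raySweep A w) := by
  obtain ⟨v, hv, hvF, rfl⟩ := hA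
  have hw : w ∉ Submodule.span ℝ (range v) :=
    fun h => hwF (Submodule.span_le.mpr (range_subset_iff.mpr hvF) h)
  refine ⟨Fin.snoc v w, linearIndependent_finSnoc.mpr ⟨hv, hw⟩,
    Fin.forall_fin_succ'.mpr ⟨fun i => ?_, ?_⟩, raySweep_posCone_eq_posCone_snoc x v w⟩
  · simpa only [Fin.snoc_castSucc] using hFE (hvF i)
  · simpa only [Fin.snoc_last] using hwE

theorem IsYaoYao.center_mem {n : ℕ} {E : Set V} {P : Set (Set V)} {x : V}
    (h : IsYaoYao n E P x) : x ∈ E := by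
  induction h with
  | zero x => exact rfl
  | succ _ _ _ _ ih1 _ => exact ⟨_, ih1, 0, by simp⟩

theorem IsYaoYao.isSimplicialCone {n : ℕ} {E : Set V} {P : Set (Set V)} {x : V}
    (h : IsYaoYao n E P x) : ∀ A ∈ P, IsSimplicialCone n E x A := by
  induction h with
  | zero x =>
    rintro A rfl
    exact ⟨Fin.elim0, linearIndependent_empty_type, fun i => i.elim0,
      (posCone_of_isEmpty _ _).symm⟩
  | succ v hv h1 _ ih1 ihm =>
    have hx := h1.center_mem
    rintro B (⟨A, hA, rfl⟩ | ⟨A, hA, rfl⟩)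
    · rw [setOf_nonpos_smul_eq_raySweep_neg]
      refine (ihm A hA).raySweep vectorSpan_le_vectorSpan_cylinder
        (fun h => hv (by simpa using neg_mem h)) ?_
      simpa using smul_mem_vectorSpan_cylinder (v := v) hx (-1)
    · exact (ih1 A hA).raySweep vectorSpan_le_vectorSpan_cylinder hv
        (by simpa using smul_mem_vectorSpan_cylinder (v := v) hx 1)

/-- Every element `A` of a Yao-Yao partition of `ℝⁿ` with center `x` is
of the form `A = x + pos(v₁,…,vₙ)` for some basis (linearly independent family of `n`
vectors) `v₁,…,vₙ` of `ℝⁿ`. -/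
theorem yaoyao_cells_are_cones (n : ℕ) (P : Set (Set (Fin n → ℝ))) (x : Fin n → ℝ)
    (hP : IsYaoYao n Set.univ P x) (A : Set (Fin n → ℝ)) (hA : A ∈ P) :
    ∃ v : Fin n → (Fin n → ℝ), LinearIndependent ℝ v ∧
      A = {z | ∃ t : Fin n → ℝ, (∀ i, 0 ≤ t i) ∧ z = x + ∑ i, t i • v i} := by
  obtain ⟨v, hv, -, hAv⟩ := hP.isSimplicialCone A hA
  exact ⟨v, hv, hAv⟩
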